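/- arXiv:1301.4446 — 3 statements merged into one kernel-verified Lean document; each statement's English description precedes it below -/
import Mathlib

section
/- Let G be a finitely generated residually finite group, and let H be a finite subgroup of G whose centralizer C_G(H) = {g ∈ G : gh = hg for all h ∈ H} is finite. Suppose moreover that G has only finitely many conjugacy classes of finite subgroups (i.e. the set of finite subgroups of G is partitioned into finitely many orbits under conjugation by G). Then the canonical projection f : Aut(G) → Out(G) splits virtually. -/
section Defs

variable (G : Type*) [Group G]

/-- The subgroup of inner automorphisms of `G`. -/
def Inn : Subgroup (MulAut G) := (MulAut.conj : G →* MulAut G).range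

instance Inn.normal : (Inn G).Normal := by
  constructor
  intro n hn φ
  obtain ⟨g, rfl⟩ := hn
  refine ⟨φ g, ?_⟩
  ext x
  simp only [MulAut.conj_apply, MulAut.mul_apply, map_mul, map_inv, MulAut.inv_def,
    MulEquiv.apply_symm_apply]

/-- The outer automorphism group `Out(G) = Aut(G)/Inn(G)`. -/
def Out := MulAut G ⧸ Inn G

instance : Group (Out G) := inferInstanceAs (Group (MulAut G ⧸ Inn G))

/-- The canonical projection `Aut(G) → Out(G)`. -/
def outProj : MulAut G →* Out G := QuotientGroup.mk' (Inn G)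

/-- A surjective homomorphism `f : A → B` splits virtually if it admits a section on some
finite-index subgroup of `B`. -/
def SplitsVirtually {A B : Type*} [Group A] [Group B] (f : A →* B) : Prop :=
  ∃ B' : Subgroup B, B'.FiniteIndex ∧ ∃ s : (↥B') →* A, ∀ x : B', f (s x) = (x : B)

/-- A group is residually finite if every nontrivial element survives in some finite quotient. -/
def ResiduallyFinite (G : Type*) [Group G] : Prop :=
  ∀ g : G, g ≠ 1 → ∃ (F : Type) (_ : Group F) (_ : Finite F) (φ : G →* F), φ g ≠ 1

/-- A group is residually `p` if every nontrivial element survives in some finite `p`-group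
quotient. -/
def ResiduallyP (p : ℕ) (G : Type*) [Group G] : Prop :=
  ∀ g : G, g ≠ 1 →
    ∃ (F : Type) (_ : Group F) (_ : Finite F) (φ : G →* F), IsPGroup p F ∧ φ g ≠ 1

/-- A group is virtually residually `p` if some finite-index subgroup is residually `p`. -/
def VirtuallyResiduallyP (p : ℕ) (G : Type*) [Group G] : Prop :=
  ∃ K : Subgroup G, K.FiniteIndex ∧ ResiduallyP p ↥K

/-- `Aut_{H̲}(G)`: the subgroup of automorphisms of `G` fixing `H` pointwise. -/
def autFix (H : Subgroup G) : Subgroup (MulAut G) where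
  carrier := {φ | ∀ h ∈ H, φ h = h}
  one_mem' := fun _ _ => rfl
  mul_mem' := by
    intro a b ha hb h hh
    show a (b h) = h
    rw [hb h hh, ha h hh]
  inv_mem' := by
    intro a ha h hh
    show a⁻¹ h = h
    calc a⁻¹ h = a⁻¹ (a h) := by rw [ha h hh]
    _ = h := by rw [MulAut.inv_def]; exact a.symm_apply_apply h

/-- `Aut_H(G)`: the subgroup of automorphisms of `G` mapping `H` onto itself. -/
def autSetwise (H : Subgroup G) : Subgroup (MulAut G) where
  carrier := {φ | ∀ g : G, φ g ∈ H ↔ g ∈ H}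
  one_mem' := fun _ => Iff.rfl
  mul_mem' := by
    intro a b ha hb g
    show a (b g) ∈ H ↔ g ∈ H
    rw [ha, hb]
  inv_mem' := by
    intro a ha g
    show a⁻¹ g ∈ H ↔ g ∈ H
    have h1 : a (a⁻¹ g) = g := by rw [MulAut.inv_def]; exact a.apply_symm_apply g
    have := ha (a⁻¹ g)
    rw [h1] at this
    exact this.symm

theorem mem_autSetwise {H : Subgroup G} {φ : MulAut G} :
    φ ∈ autSetwise G H ↔ ∀ g : G, φ g ∈ H ↔ g ∈ H := Iff.rfl

/-- `H` is an Aut-splitting subgroup of `G` if the restriction of `Aut(G) → Out(G)` to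
`Aut_{H̲}(G)` has finite kernel and an image of finite index in `Out(G)`. -/
def IsAutSplitting (H : Subgroup G) : Prop :=
  Finite ((outProj G).comp (autFix G H).subtype).ker ∧
    ((autFix G H).map (outProj G)).FiniteIndex

/-- The conjugate `gKg⁻¹` of a subgroup. -/
def conjSubgroup (g : G) (K : Subgroup G) : Subgroup G :=
  K.map (MulAut.conj g).toMonoidHom

end Defs

/-!
Let `A = Aut_{H̲}(G)`. An element of `A` is inner only if it is conjugation by an element of
`C_G(H)`, so `A → Out(G)` has finite kernel. Its image has finite index: `Aut(G)` permutes the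
finitely many conjugacy classes of finite subgroups, so the stabiliser `Aut_H(G) Inn(G)` of the
class of `H` has finite index, and `A` has finite index in `Aut_H(G)` because `H` is finite.
Since `G` is finitely generated and residually finite, so is `Aut(G)`; hence some finite-index
subgroup of `A` avoids the finite kernel and maps isomorphically onto a finite-index subgroup of
`Out(G)`. The inverse of this isomorphism is the virtual splitting.
-/

open MulAction Pointwise

section Actions

variable {Γ X : Type*} [Group Γ] [MulAction Γ X]

theorem finiteIndex_stabilizer_of_finite_orbit {x : X} (h : (orbit Γ x).Finite) :
    (stabilizer Γ x).FiniteIndex :=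
  ⟨by rw [index_stabilizer]; exact ((Set.ncard_pos h).2 ⟨x, mem_orbit_self x⟩).ne'⟩

theorem finiteIndex_stabilizer_sup_of_finite_orbits {N : Subgroup Γ} [N.Normal] {x : X}
    {S : Set X} (hS : S.Finite) (hx : ∀ γ : Γ, ∃ n ∈ N, n • γ • x ∈ S) :
    (stabilizer Γ x ⊔ N).FiniteIndex := by
  have hle : stabilizer Γ (orbit N x) ≤ stabilizer Γ x ⊔ N := by
    intro γ hγ
    obtain ⟨⟨n, hn⟩, hnx⟩ : γ • x ∈ orbit N x := by
      rw [← mem_stabilizer_iff.mp hγ]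
      exact Set.smul_mem_smul_set (mem_orbit_self x)
    have hfix : n⁻¹ * γ ∈ stabilizer Γ x := by
      rw [mem_stabilizer_iff, mul_smul, ← hnx]
      exact inv_smul_smul n x
    simpa using mul_mem (Subgroup.mem_sup_right hn) (Subgroup.mem_sup_left hfix)
  have : (stabilizer Γ (orbit N x)).FiniteIndex := by
    refine finiteIndex_stabilizer_of_finite_orbit ((hS.image (orbit N)).subset ?_)
    rintro _ ⟨γ, rfl⟩
    obtain ⟨n, hn, hnγ⟩ := hx γ
    exact ⟨_, hnγ, (orbit_smul (⟨n, hn⟩ : N) (γ • x)).trans (smul_orbit_eq_orbit_smul N x γ).symm⟩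
  exact Subgroup.finiteIndex_of_le hle

theorem relIndex_fixingSubgroup_stabilizer_ne_zero {s : Set X} (hs : s.Finite) :
    (fixingSubgroup Γ s).relIndex (stabilizer Γ s) ≠ 0 := by
  have hfix : (fixingSubgroup Γ s).subgroupOf (stabilizer Γ s) =
      ⨅ x : s, stabilizer (stabilizer Γ s) (x : X) := by
    ext γ
    simp [Subgroup.mem_subgroupOf, mem_fixingSubgroup_iff, Subgroup.mem_iInf, Subgroup.smul_def]
  have := hs.to_subtype
  rw [Subgroup.relIndex, hfix]
  refine (Subgroup.finiteIndex_iInf fun x => finiteIndex_stabilizer_of_finite_orbit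
    (hs.subset ?_)).index_ne_zero
  rintro _ ⟨γ, rfl⟩
  exact (mem_stabilizer_set.mp γ.2 x).2 x.2

end Actions

section Index

variable {A B : Type*} [Group A] [Group B]

theorem Subgroup.relIndex_map_map_ne_zero (f : A →* B) {H K : Subgroup A}
    (h : H.relIndex K ≠ 0) : (H.map f).relIndex (K.map f) ≠ 0 := by
  rw [← relIndex_comap]
  exact ne_zero_of_dvd_ne_zero h (relIndex_dvd_of_le_left K (le_comap_map f H))

theorem Subgroup.finiteIndex_map_of_relIndex_ne_zero (f : A →* B) {H K : Subgroup A}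
    (h : H.relIndex K ≠ 0) [(K.map f).FiniteIndex] : (H.map f).FiniteIndex :=
  ⟨by
    rw [← relIndex_top_right]
    exact relIndex_ne_zero_trans (relIndex_map_map_ne_zero f h)
      (by rw [relIndex_top_right]; exact FiniteIndex.index_ne_zero)⟩

end Index

section ResiduallyFinite

variable {G : Type*} [Group G]

theorem Group.FG.finite_monoidHom [Group.FG G] (F : Type*) [Group F] [Finite F] :
    Finite (G →* F) := by
  obtain ⟨S, hS⟩ := Group.fg_def.mp ‹_›
  refine Finite.of_injective (fun φ : G →* F => fun s : S => φ s) fun φ ψ h => ?_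
  exact MonoidHom.eq_of_eqOn_dense hS fun s hs => congrFun h ⟨s, hs⟩

theorem Group.ResiduallyFinite.exists_characteristic_finiteIndex_notMem [Group.FG G]
    [Group.ResiduallyFinite G] {x : G} (hx : x ≠ 1) :
    ∃ M : Subgroup G, M.Characteristic ∧ M.FiniteIndex ∧ x ∉ M := by
  obtain ⟨N, hxN⟩ := exists_finiteIndexNormalSubgroup_notMem x hx
  have := Group.FG.finite_monoidHom (G := G) (G ⧸ N.toSubgroup)
  -- the intersection of the kernels of the finitely many homomorphisms `G → G ⧸ N`
  refine ⟨⨅ ψ : G →* G ⧸ N.toSubgroup, ψ.ker, ?_, Subgroup.finiteIndex_iInf fun ψ => inferInstance,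
    fun hx' => hxN ?_⟩
  · refine Subgroup.characteristic_iff_le_comap.mpr fun e y hy => Subgroup.mem_iInf.mpr fun ψ => ?_
    exact Subgroup.mem_iInf.mp hy (ψ.comp e.toMonoidHom)
  · simpa [FiniteIndexNormalSubgroup.mem_toSubgroup_iff] using
      Subgroup.mem_iInf.mp hx' (QuotientGroup.mk' N.toSubgroup)

def MulAut.quotientCharacteristic (M : Subgroup G) [M.Characteristic] :
    MulAut G →* MulAut (G ⧸ M) where
  toFun e := QuotientGroup.congr M M e (Subgroup.characteristic_iff_map_eq.mp ‹_› e)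
  map_one' := by ext q; induction q using QuotientGroup.induction_on; rfl
  map_mul' _ _ := by ext q; induction q using QuotientGroup.induction_on; rfl

/-- Baumslag: if `α g ≠ g`, then `α` acts nontrivially on `G ⧸ M` for a characteristic
finite-index `M` not containing `g⁻¹ * α g`. -/
instance MulAut.residuallyFinite [Group.FG G] [Group.ResiduallyFinite G] :
    Group.ResiduallyFinite (MulAut G) := by
  refine Group.residuallyFinite_iff_exists_finiteIndex.mpr fun α hα => ?_
  obtain ⟨g, hg⟩ : ∃ g, α g ≠ g := by
    by_contra! h
    exact hα (MulEquiv.ext h)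
  obtain ⟨M, _, _, hM⟩ := Group.ResiduallyFinite.exists_characteristic_finiteIndex_notMem
    (x := g⁻¹ * α g) (by rwa [Ne, inv_mul_eq_one, eq_comm])
  refine ⟨(MulAut.quotientCharacteristic M).ker, inferInstance, fun hker => hM ?_⟩
  have : ((α g : G) : G ⧸ M) = g := DFunLike.congr_fun hker (g : G ⧸ M)
  exact QuotientGroup.eq.mp this.symm

end ResiduallyFinite

section VirtualSplitting

variable {A B : Type*} [Group A] [Group B]

theorem Group.ResiduallyFinite.exists_finiteIndex_inf_eq_bot [Group.ResiduallyFinite A]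
    (K : Subgroup A) [Finite K] : ∃ N : Subgroup A, N.FiniteIndex ∧ N ⊓ K = ⊥ := by
  choose N hN hNk using fun k : {k : K // (k : A) ≠ 1} =>
    Group.residuallyFinite_iff_exists_finiteIndex.mp ‹_› (k.1 : A) k.2
  refine ⟨⨅ k, N k, Subgroup.finiteIndex_iInf hN, eq_bot_iff.mpr fun a ⟨ha, haK⟩ => ?_⟩
  by_contra h1
  exact hNk ⟨⟨a, haK⟩, h1⟩ (Subgroup.mem_iInf.mp ha ⟨⟨a, haK⟩, h1⟩)

theorem splitsVirtually_of_injective_domRestrict (f : A →* B) {N : Subgroup A}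
    (hinj : Function.Injective (f.domRestrict N)) (hN : (N.map f).FiniteIndex) :
    SplitsVirtually f := by
  let e : N ≃* N.map f :=
    (MonoidHom.ofInjective hinj).trans (MulEquiv.subgroupCongr (f.domRestrict_range N))
  refine ⟨N.map f, hN, N.subtype.comp e.symm.toMonoidHom, fun b => ?_⟩
  conv_rhs => rw [← e.apply_symm_apply b]
  rfl

theorem splitsVirtually_of_finite_ker_comp_subtype [Group.ResiduallyFinite A] (f : A →* B)
    {A₀ : Subgroup A} (hker : Finite (f.comp A₀.subtype).ker) (hA₀ : (A₀.map f).FiniteIndex) :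
    SplitsVirtually f := by
  have : Finite ((f.comp A₀.subtype).ker.map A₀.subtype) :=
    Finite.of_surjective _ (MonoidHom.subgroupMap_surjective _ _)
  obtain ⟨N, hN, hNK⟩ :=
    Group.ResiduallyFinite.exists_finiteIndex_inf_eq_bot ((f.comp A₀.subtype).ker.map A₀.subtype)
  refine splitsVirtually_of_injective_domRestrict f (N := N ⊓ A₀) ?_ ?_
  · refine (injective_iff_map_eq_one _).mpr fun ⟨a, haN, haA₀⟩ ha => Subtype.ext ?_
    have : a ∈ N ⊓ (f.comp A₀.subtype).ker.map A₀.subtype := ⟨haN, ⟨⟨a, haA₀⟩, ha, rfl⟩⟩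
    rwa [hNK] at this
  · refine Subgroup.finiteIndex_map_of_relIndex_ne_zero f (K := A₀) ?_
    rw [Subgroup.inf_relIndex_right]
    exact Subgroup.isFiniteRelIndex_of_finiteIndex.relIndex_ne_zero

end VirtualSplitting

section AutSplitting

variable {G : Type*} [Group G] {H : Subgroup G}

theorem ker_outProj : (outProj G).ker = Inn G := QuotientGroup.ker_mk' _

theorem outProj_surjective : Function.Surjective (outProj G) := QuotientGroup.mk'_surjective _

theorem autSetwise_eq_stabilizer : autSetwise G H = stabilizer (MulAut G) (H : Set G) := by
  ext φ
  rw [mem_autSetwise, mem_stabilizer_set]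
  rfl

theorem autFix_eq_fixingSubgroup : autFix G H = fixingSubgroup (MulAut G) (H : Set G) := by
  ext φ
  rw [mem_fixingSubgroup_iff]
  rfl

theorem conj_mem_autFix_iff {g : G} :
    MulAut.conj g ∈ autFix G H ↔ g ∈ Subgroup.centralizer (H : Set G) := by
  rw [Subgroup.mem_centralizer_iff]
  refine forall₂_congr fun h _ => ?_
  rw [MulAut.conj_apply, mul_inv_eq_iff_eq_mul, eq_comm]

theorem MulAut.smul_coe_subgroup (φ : MulAut G) (K : Subgroup G) :
    φ • (K : Set G) = K.map φ.toMonoidHom := by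
  ext; simp [Set.mem_smul_set, MulAut.smul_def]

theorem finiteIndex_autSetwise_sup_inn [Finite H]
    (hconj : ∃ S : Finset (Subgroup G), ∀ K : Subgroup G, Finite K →
      ∃ K' ∈ S, ∃ g : G, conjSubgroup G g K = K') :
    (autSetwise G H ⊔ Inn G).FiniteIndex := by
  obtain ⟨S, hS⟩ := hconj
  rw [autSetwise_eq_stabilizer]
  refine finiteIndex_stabilizer_sup_of_finite_orbits
    (S.finite_toSet.image ((↑) : Subgroup G → Set G)) fun φ => ?_
  have : Finite (H.map φ.toMonoidHom) :=
    Finite.of_surjective _ (MonoidHom.subgroupMap_surjective _ _)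
  obtain ⟨K', hK', g, hg⟩ := hS _ this
  refine ⟨MulAut.conj g, ⟨g, rfl⟩, K', hK', ?_⟩
  rw [MulAut.smul_coe_subgroup, MulAut.smul_coe_subgroup, ← hg]
  rfl

theorem finite_ker_outProj_comp_autFix (hcent : Finite (Subgroup.centralizer (H : Set G))) :
    Finite ((outProj G).comp (autFix G H).subtype).ker := by
  refine Finite.of_surjective (fun g : Subgroup.centralizer (H : Set G) =>
    ⟨⟨MulAut.conj g, conj_mem_autFix_iff.mpr g.2⟩, ?_⟩) ?_
  · rw [MonoidHom.mem_ker, MonoidHom.comp_apply, ← MonoidHom.mem_ker, ker_outProj]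
    exact ⟨g, rfl⟩
  · rintro ⟨⟨φ, hφ⟩, hφker⟩
    obtain ⟨g, rfl⟩ : φ ∈ Inn G := by rwa [← ker_outProj]
    exact ⟨⟨g, conj_mem_autFix_iff.mp hφ⟩, rfl⟩

theorem finiteIndex_map_outProj_autFix [Finite H]
    (hconj : ∃ S : Finset (Subgroup G), ∀ K : Subgroup G, Finite K →
      ∃ K' ∈ S, ∃ g : G, conjSubgroup G g K = K') :
    ((autFix G H).map (outProj G)).FiniteIndex := by
  have : ((autSetwise G H).map (outProj G)).FiniteIndex := by
    have := finiteIndex_autSetwise_sup_inn (H := H) hconj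
    constructor
    rw [Subgroup.index_map, ker_outProj, (outProj G).range_eq_top_of_surjective outProj_surjective,
      Subgroup.index_top, mul_one]
    exact Subgroup.FiniteIndex.index_ne_zero
  refine Subgroup.finiteIndex_map_of_relIndex_ne_zero _ (K := autSetwise G H) ?_
  rw [autFix_eq_fixingSubgroup, autSetwise_eq_stabilizer]
  exact relIndex_fixingSubgroup_stabilizer_ne_zero (Set.toFinite _)

theorem isAutSplitting_of_finite_centralizer [Finite H]
    (hcent : Finite (Subgroup.centralizer (H : Set G)))
    (hconj : ∃ S : Finset (Subgroup G), ∀ K : Subgroup G, Finite K →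
      ∃ K' ∈ S, ∃ g : G, conjSubgroup G g K = K') :
    IsAutSplitting G H :=
  ⟨finite_ker_outProj_comp_autFix hcent, finiteIndex_map_outProj_autFix (H := H) hconj⟩

theorem IsAutSplitting.splitsVirtually [Group.FG G] [Group.ResiduallyFinite G]
    (h : IsAutSplitting G H) : SplitsVirtually (outProj G) :=
  splitsVirtually_of_finite_ker_comp_subtype _ h.1 h.2

end AutSplitting

/-- If `G` is a finitely generated residually finite group, `H` is a finite
subgroup of `G` with finite centralizer, and `G` has finitely many conjugacy classes of finite
subgroups, then `Aut(G) → Out(G)` splits virtually. -/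
theorem statement0 (G : Type*) [Group G] (hfg : Group.FG G) (hrf : ResiduallyFinite G)
    (H : Subgroup G) (hHfin : Finite H)
    (hcent : Finite (Subgroup.centralizer (H : Set G)))
    (hconj : ∃ S : Finset (Subgroup G), ∀ K : Subgroup G, Finite K →
      ∃ K' ∈ S, ∃ g : G, conjSubgroup G g K = K') :
    SplitsVirtually (outProj G) :=
  have := Group.residuallyFinite_of_forall_exists_finite_monoidHom hrf
  (isAutSplitting_of_finite_centralizer hcent hconj).splitsVirtually
end

section
/- Let G be a finitely generated residually finite group such that the canonical projection f : Aut(G) → Out(G) splits virtually. Then Out(G) is residually finite. -/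
theorem residuallyFinite_iff_group_residuallyFinite {G : Type*} [Group G] :
    ResiduallyFinite G ↔ Group.ResiduallyFinite G := by
  refine ⟨Group.residuallyFinite_of_forall_exists_finite_monoidHom, fun h g hg => ?_⟩
  obtain ⟨H, hgH⟩ := Group.exists_finiteIndexNormalSubgroup_notMem g hg
  have : Small.{0} (G ⧸ H.toSubgroup) := Countable.toSmall _
  let e : Shrink.{0} (G ⧸ H.toSubgroup) ≃* G ⧸ H.toSubgroup := Shrink.mulEquiv
  exact ⟨_, inferInstance, inferInstance, e.symm.toMonoidHom.comp (QuotientGroup.mk' _),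
    by simpa [QuotientGroup.eq_one_iff, FiniteIndexNormalSubgroup.mem_toSubgroup_iff] using hgH⟩

theorem Group.finite_monoidHom_of_fg (G F : Type*) [Group G] [Group.FG G] [Monoid F] [Finite F] :
    Finite (G →* F) := by
  obtain ⟨S, hS⟩ := Group.fg_def.mp ‹Group.FG G›
  refine Finite.of_injective (fun f : G →* F => fun s : S => f s) fun f g hfg => ?_
  exact MonoidHom.eq_of_eqOn_dense hS fun x hx => congrFun hfg ⟨x, hx⟩

def MulAut.precompPerm (G F : Type*) [Group G] [Monoid F] :
    MulAut G →* Equiv.Perm (G →* F) where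
  toFun φ := MulEquiv.monoidHomCongrLeftEquiv φ
  map_one' := MulEquiv.monoidHomCongrLeftEquiv_refl
  map_mul' φ ψ := MulEquiv.monoidHomCongrLeftEquiv_trans ψ φ

namespace Group.ResiduallyFinite

variable {G G' : Type*} [Group G] [Group G']

theorem of_injective (f : G →* G') (hf : Function.Injective f) [ResiduallyFinite G'] :
    ResiduallyFinite G := by
  refine residuallyFinite_of_forall_exists_finite_monoidHom fun g hg => ?_
  obtain ⟨H, hgH⟩ := exists_finiteIndexNormalSubgroup_notMem (f g) (by simpa using hf.ne hg)
  exact ⟨G' ⧸ H.toSubgroup, inferInstance, inferInstance, (QuotientGroup.mk' _).comp f,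
    by simpa [QuotientGroup.eq_one_iff, FiniteIndexNormalSubgroup.mem_toSubgroup_iff] using hgH⟩

theorem of_finiteIndex (H : Subgroup G) [H.FiniteIndex] [ResiduallyFinite H] :
    ResiduallyFinite G := by
  refine residuallyFinite_iff_exists_finiteIndex.mpr fun g hg => ?_
  by_cases hgH : g ∈ H
  · obtain ⟨K, hK, hgK⟩ := residuallyFinite_iff_exists_finiteIndex.mp ‹_›
      (⟨g, hgH⟩ : H) (by simpa using hg)
    refine ⟨K.map H.subtype, ⟨?_⟩, ?_⟩
    · rw [Subgroup.index_map_subtype]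
      exact mul_ne_zero hK.index_ne_zero Subgroup.FiniteIndex.index_ne_zero
    · rintro ⟨k, hk, rfl⟩
      exact hgK hk
  · exact ⟨H, inferInstance, hgH⟩

/-- Baumslag's theorem. -/
instance mulAut [FG G] [ResiduallyFinite G] : ResiduallyFinite (MulAut G) := by
  refine residuallyFinite_of_forall_exists_finite_monoidHom fun φ hφ => ?_
  obtain ⟨g, hg⟩ : ∃ g, φ g ≠ g := by
    by_contra! h
    exact hφ (MulEquiv.ext h)
  obtain ⟨N, hN⟩ := exists_finiteIndexNormalSubgroup_of_residuallyFinite (φ g) g hg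
  have := finite_monoidHom_of_fg G (G ⧸ N.toSubgroup)
  refine ⟨_, inferInstance, inferInstance, MulAut.precompPerm G (G ⧸ N.toSubgroup),
    fun h => hN ?_⟩
  have := DFunLike.congr_fun (Equiv.ext_iff.mp h (QuotientGroup.mk' N.toSubgroup)) (φ g)
  simpa [MulAut.precompPerm] using this.symm

end Group.ResiduallyFinite

theorem SplitsVirtually.residuallyFinite {A B : Type*} [Group A] [Group B] {f : A →* B}
    (hf : SplitsVirtually f) [Group.ResiduallyFinite A] : Group.ResiduallyFinite B := by
  obtain ⟨B', hB', s, hs⟩ := hf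
  have : Group.ResiduallyFinite B' :=
    .of_injective s fun x y hxy => Subtype.ext (by rw [← hs x, ← hs y, hxy])
  exact .of_finiteIndex B'

/-- If `G` is a finitely generated residually finite group and
`Aut(G) → Out(G)` splits virtually, then `Out(G)` is residually finite. -/
theorem statement1 (G : Type*) [Group G] (hfg : Group.FG G) (hrf : ResiduallyFinite G)
    (hsplit : SplitsVirtually (outProj G)) :
    ResiduallyFinite (Out G) := by
  have := residuallyFinite_iff_group_residuallyFinite.mp hrf
  exact residuallyFinite_iff_group_residuallyFinite.mpr hsplit.residuallyFinite
end

section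
/- Let G be a group and H ≤ G a subgroup such that Out(H) is finite. Then Out_{H̲}(G) has finite index in Out_H(G); in fact the index [Out_H(G) : Out_{H̲}(G)] is at most the order of Out(H). -/
/-!
Restricting to `H` gives a homomorphism `Aut_H(G) → Out(H)`. An automorphism in its kernel acts
on `H` as conjugation by some `h ∈ H`, so composing it with conjugation by `h⁻¹` gives an element
of `Aut_{H̲}(G)` with the same image in `Out(G)`. Hence the index of `Out_{H̲}(G)` in `Out_H(G)`
divides the order of the image of `Aut_H(G) → Out(H)`.
-/

namespace Subgroup

theorem relIndex_range_dvd_card_range {A B C : Type*} [Group A] [Group B] [Group C]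
    (q : A →* B) (r : A →* C) {X : Subgroup B} (h : r.ker ≤ X.comap q) :
    X.relIndex q.range ∣ Nat.card r.range := by
  rw [← index_comap, ← index_ker]
  exact index_dvd_of_le h

variable {G : Type*} [Group G] (H : Subgroup G)

def restrictAutSetwise : autSetwise G H →* MulAut H where
  toFun φ :=
    { toFun := fun h => ⟨φ.1 (h : G), (φ.2 h).mpr h.2⟩
      invFun := fun h => ⟨φ.1⁻¹ (h : G), ((autSetwise G H).inv_mem φ.2 h).mpr h.2⟩
      left_inv := fun h => Subtype.ext (φ.1.symm_apply_apply h)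
      right_inv := fun h => Subtype.ext (φ.1.apply_symm_apply h)
      map_mul' := fun a b => Subtype.ext (map_mul φ.1 (a : G) (b : G)) }
  map_one' := rfl
  map_mul' _ _ := rfl

theorem outProj_mem_map_autFix_of_mem_ker {φ : autSetwise G H}
    (hφ : φ ∈ ((outProj H).comp H.restrictAutSetwise).ker) :
    outProj G φ ∈ (autFix G H).map (outProj G) := by
  obtain ⟨h, hh⟩ := (QuotientGroup.eq_one_iff _).mp hφ
  refine ⟨MulAut.conj (h : G)⁻¹ * φ, fun x hx => ?_, ?_⟩
  · have hφx : φ.1 x = h * x * (h : G)⁻¹ :=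
      (congrArg Subtype.val (DFunLike.congr_fun hh (⟨x, hx⟩ : H))).symm
    simp [hφx, mul_assoc]
  · have hinner : outProj G (MulAut.conj (h : G)⁻¹) = 1 :=
      (QuotientGroup.eq_one_iff _).mpr ⟨(h : G)⁻¹, rfl⟩
    rw [map_mul, hinner, one_mul]

end Subgroup

/-- If `Out(H)` is finite, then `Out_{H̲}(G)` has finite index in `Out_H(G)`,
and the index is at most the order of `Out(H)`. -/
theorem statement13 (G : Type*) [Group G] (H : Subgroup G) (hout : Finite (Out ↥H)) :
    ((autFix G H).map (outProj G)).relIndex ((autSetwise G H).map (outProj G)) ≠ 0 ∧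
      ((autFix G H).map (outProj G)).relIndex ((autSetwise G H).map (outProj G)) ≤
        Nat.card (Out ↥H) := by
  have hdvd := Subgroup.relIndex_range_dvd_card_range
    ((outProj G).comp (autSetwise G H).subtype) ((outProj H).comp H.restrictAutSetwise)
    (X := (autFix G H).map (outProj G)) fun _ => H.outProj_mem_map_autFix_of_mem_ker
  rw [MonoidHom.range_comp, Subgroup.range_subtype] at hdvd
  have hpos : 0 < Nat.card ((outProj H).comp H.restrictAutSetwise).range := Nat.card_pos
  exact ⟨ne_zero_of_dvd_ne_zero hpos.ne' hdvd,
    (Nat.le_of_dvd hpos hdvd).trans (Subgroup.card_le_card_group _)⟩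
end
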